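/- arXiv:1712.00447 — 6 statements merged into one kernel-verified Lean document; each statement's English description precedes it below -/
import Mathlib

section
/- The linear map F with F(v)_{i×j} = v_{i×j} − v_{(i−1)×(j−1)} maps the polytope Γ^r (defined by the inequalities: 0 ≤ v_{1×1}; v_{(n−k)×k} − v_{(n−k−1)×(k−1)} ≤ r; v_{(i−1)×j} − v_{(i−2)×(j−1)} ≤ v_{i×j} − v_{(i−1)×(j−1)} for 2 ≤ i ≤ n−k, 1 ≤ j ≤ k; and v_{i×(j−1)} − v_{(i−1)×(j−2)} ≤ v_{i×j} − v_{(i−1)×(j−1)} for 1 ≤ i ≤ n−k, 2 ≤ j ≤ k) bijectively onto the Gelfand–Tsetlin polytope GT_r defined by 0 ≤ f_{1×1}, f_{(n−k)×k} ≤ r, f_{(i−1)×j} ≤ f_{i×j}, and f_{i×(j−1)} ≤ f_{i×j}. -/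
/-- Extend a vector `v` indexed by the (0-based) boxes of the `(n-k) × k` grid
to 1-based coordinates on `ℕ × ℕ`, with value `0` outside the grid (in
particular when a coordinate equals `0`). -/
noncomputable def extGrid (n k : ℕ) (v : Fin (n - k) × Fin k → ℝ) (i j : ℕ) : ℝ :=
  ∑ p : Fin (n - k) × Fin k, if p.1.1 + 1 = i ∧ p.2.1 + 1 = j then v p else 0

/-- The linear map `F(v)_{i×j} = v_{i×j} - v_{(i-1)×(j-1)}`. -/
noncomputable def Fmap (n k : ℕ) (v : Fin (n - k) × Fin k → ℝ) :
    Fin (n - k) × Fin k → ℝ :=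
  fun p => v p - extGrid n k v p.1.1 p.2.1

lemma extGrid_eq (n k : ℕ) (v : Fin (n-k) × Fin k → ℝ) (i j : ℕ) :
    extGrid n k v i j =
      if h : 1 ≤ i ∧ i ≤ n - k ∧ 1 ≤ j ∧ j ≤ k then
        v (⟨i - 1, by omega⟩, ⟨j - 1, by omega⟩) else 0 := by
  unfold extGrid
  split
  · rename_i h
    rw [Finset.sum_eq_single (⟨⟨i-1, by omega⟩, ⟨j-1, by omega⟩⟩ : Fin (n-k) × Fin k)]
    · rw [if_pos]; constructor <;> simp <;> omega
    · intro p _ hp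
      rw [if_neg]
      rintro ⟨h1, h2⟩
      apply hp
      have := p.1.2; have := p.2.2
      ext <;> simp <;> omega
    · intro h; simp at h
  · rename_i h
    apply Finset.sum_eq_zero
    intro p _
    rw [if_neg]
    rintro ⟨h1, h2⟩
    have := p.1.2; have := p.2.2
    exact h ⟨by omega, by omega, by omega, by omega⟩

lemma extGrid_zero (n k : ℕ) (v : Fin (n-k) × Fin k → ℝ) (i j : ℕ)
    (h : ¬ (1 ≤ i ∧ i ≤ n - k ∧ 1 ≤ j ∧ j ≤ k)) : extGrid n k v i j = 0 := by
  rw [extGrid_eq, dif_neg h]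

lemma extGrid_apply (n k : ℕ) (v : Fin (n-k) × Fin k → ℝ) (p : Fin (n-k) × Fin k) :
    extGrid n k v (p.1.1+1) (p.2.1+1) = v p := by
  have := p.1.2; have := p.2.2
  rw [extGrid_eq, dif_pos ⟨by omega, by omega, by omega, by omega⟩]
  rfl

lemma ext_Fmap (n k : ℕ) (v : Fin (n-k) × Fin k → ℝ) (i j : ℕ)
    (hi : i ≤ n - k) (hj : j ≤ k) :
    extGrid n k (Fmap n k v) i j = extGrid n k v i j - extGrid n k v (i-1) (j-1) := by
  by_cases h : 1 ≤ i ∧ 1 ≤ j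
  · rw [extGrid_eq n k (Fmap n k v), dif_pos ⟨h.1, hi, h.2, hj⟩,
      extGrid_eq n k v i j, dif_pos ⟨h.1, hi, h.2, hj⟩]
    rfl
  · rw [extGrid_zero n k _ i j (by omega), extGrid_zero n k v i j (by omega),
      extGrid_zero n k v (i-1) (j-1) (by omega)]
    ring

noncomputable def Gmap (n k : ℕ) (f : Fin (n - k) × Fin k → ℝ) :
    Fin (n - k) × Fin k → ℝ :=
  fun p => ∑ t ∈ Finset.range (min p.1.1 p.2.1 + 1),
    extGrid n k f (p.1.1 + 1 - t) (p.2.1 + 1 - t)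

lemma Gmap_Fmap (n k : ℕ) (v : Fin (n-k) × Fin k → ℝ) : Gmap n k (Fmap n k v) = v := by
  funext p
  obtain ⟨⟨a, ha⟩, ⟨b, hb⟩⟩ := p
  unfold Gmap
  simp only
  have key : ∀ t ∈ Finset.range (min a b + 1),
      extGrid n k (Fmap n k v) (a + 1 - t) (b + 1 - t)
        = extGrid n k v (a + 1 - t) (b + 1 - t) - extGrid n k v (a + 1 - (t+1)) (b + 1 - (t+1)) := by
    intro t ht
    rw [ext_Fmap n k v _ _ (by omega) (by omega)]
    have e1 : a + 1 - t - 1 = a + 1 - (t+1) := by omega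
    have e2 : b + 1 - t - 1 = b + 1 - (t+1) := by omega
    rw [e1, e2]
  rw [Finset.sum_congr rfl key, Finset.sum_range_sub' (fun t => extGrid n k v (a + 1 - t) (b + 1 - t))]
  rw [extGrid_zero n k v (a + 1 - (a ⊓ b + 1)) (b + 1 - (a ⊓ b + 1)) (by omega)]
  have := extGrid_apply n k v (⟨a, ha⟩, ⟨b, hb⟩)
  simp only at this
  simpa using this

lemma Fmap_Gmap (n k : ℕ) (f : Fin (n-k) × Fin k → ℝ) : Fmap n k (Gmap n k f) = f := by
  funext p
  obtain ⟨⟨a, ha⟩, ⟨b, hb⟩⟩ := p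
  show Gmap n k f (⟨a, ha⟩, ⟨b, hb⟩) - extGrid n k (Gmap n k f) a b = f (⟨a, ha⟩, ⟨b, hb⟩)
  by_cases h : 1 ≤ a ∧ 1 ≤ b
  · have hext : extGrid n k (Gmap n k f) a b = Gmap n k f (⟨a - 1, by omega⟩, ⟨b - 1, by omega⟩) := by
      rw [extGrid_eq, dif_pos ⟨h.1, by omega, h.2, by omega⟩]
    rw [hext]
    unfold Gmap
    simp only
    have hmin : min (a-1) (b-1) + 1 = min a b := by omega
    rw [hmin]
    have hshift : ∀ t ∈ Finset.range (min a b),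
        extGrid n k f (a - 1 + 1 - t) (b - 1 + 1 - t) = extGrid n k f (a + 1 - (t+1)) (b + 1 - (t+1)) := by
      intro t ht
      have e1 : a - 1 + 1 - t = a + 1 - (t+1) := by omega
      have e2 : b - 1 + 1 - t = b + 1 - (t+1) := by omega
      rw [e1, e2]
    rw [Finset.sum_congr rfl hshift,
      Finset.sum_range_succ' (fun t => extGrid n k f (a + 1 - t) (b + 1 - t)) (min a b)]
    simp only [Nat.sub_zero]
    have := extGrid_apply n k f (⟨a, ha⟩, ⟨b, hb⟩)
    simp only at this
    rw [this]
    ring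
  · have hext : extGrid n k (Gmap n k f) a b = 0 := extGrid_zero n k _ a b (by omega)
    rw [hext]
    unfold Gmap
    simp only
    have hmin : min a b + 1 = 1 := by omega
    rw [hmin, Finset.sum_range_one]
    have := extGrid_apply n k f (⟨a, ha⟩, ⟨b, hb⟩)
    simp only at this
    simpa using this

/-- The polytope `Γ^r`, cut out by the tropicalised superpotential inequalities
in the rectangles cluster (1-based coordinates `v_{i×j}`, conventionally `0`
when `i = 0` or `j = 0`). -/
def GammaRect (n k : ℕ) (r : ℝ) : Set (Fin (n - k) × Fin k → ℝ) :=
  {v | 0 ≤ extGrid n k v 1 1 ∧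
       extGrid n k v (n - k) k - extGrid n k v (n - k - 1) (k - 1) ≤ r ∧
       (∀ i j : ℕ, 2 ≤ i → i ≤ n - k → 1 ≤ j → j ≤ k →
         extGrid n k v (i - 1) j - extGrid n k v (i - 2) (j - 1) ≤
           extGrid n k v i j - extGrid n k v (i - 1) (j - 1)) ∧
       (∀ i j : ℕ, 1 ≤ i → i ≤ n - k → 2 ≤ j → j ≤ k →
         extGrid n k v i (j - 1) - extGrid n k v (i - 1) (j - 2) ≤
           extGrid n k v i j - extGrid n k v (i - 1) (j - 1))}

/-- The Gelfand–Tsetlin polytope `GT_r`: `0 ≤ f_{1×1}`, `f_{(n-k)×k} ≤ r`,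
`f_{(i-1)×j} ≤ f_{i×j}` and `f_{i×(j-1)} ≤ f_{i×j}`. -/
def GTPoly (n k : ℕ) (r : ℝ) : Set (Fin (n - k) × Fin k → ℝ) :=
  {f | 0 ≤ extGrid n k f 1 1 ∧ extGrid n k f (n - k) k ≤ r ∧
       (∀ i j : ℕ, 1 ≤ i → i ≤ n - k → 1 ≤ j → j ≤ k →
         extGrid n k f (i - 1) j ≤ extGrid n k f i j ∧
         extGrid n k f i (j - 1) ≤ extGrid n k f i j)}

/-- `F` maps the superpotential polytope `Γ^r` bijectively onto the
Gelfand–Tsetlin polytope `GT_r`. -/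
theorem stmt3 (n k : ℕ) (hk : 1 ≤ k) (hkn : k < n) (r : ℝ) :
    Set.BijOn (Fmap n k) (GammaRect n k r) (GTPoly n k r) := by
  have hnk : 1 ≤ n - k := by omega
  refine ⟨?_, ?_, ?_⟩
  · -- MapsTo
    rintro v ⟨h1, h2, h3, h4⟩
    have z1 : ∀ j', extGrid n k v 0 j' = 0 := fun j' => extGrid_zero _ _ _ _ _ (by omega)
    have z2 : ∀ i', extGrid n k v i' 0 = 0 := fun i' => extGrid_zero _ _ _ _ _ (by omega)
    have row1 : ∀ j, 1 ≤ j → j ≤ k → 0 ≤ extGrid n k v 1 j := by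
      intro j hj1
      induction j, hj1 using Nat.le_induction with
      | base => intro _; exact h1
      | succ j hj ih =>
        intro hjk
        have step := h4 1 (j+1) le_rfl hnk (by omega) hjk
        have e1 : j + 1 - 1 = j := by omega
        rw [e1, z1, z1] at step
        have := ih (by omega)
        linarith
    have col1 : ∀ i, 1 ≤ i → i ≤ n - k → 0 ≤ extGrid n k v i 1 := by
      intro i hi1
      induction i, hi1 using Nat.le_induction with
      | base => intro _; exact h1
      | succ i hi ih =>
        intro hin
        have step := h3 (i+1) 1 (by omega) hin le_rfl hk
        have e1 : i + 1 - 1 = i := by omega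
        rw [e1, z2, z2] at step
        have := ih (by omega)
        linarith
    refine ⟨?_, ?_, ?_⟩
    · rw [ext_Fmap n k v 1 1 hnk hk]
      simp only [Nat.sub_self]
      rw [extGrid_zero n k v 0 0 (by omega)]
      linarith
    · rw [ext_Fmap n k v (n-k) k le_rfl le_rfl]
      exact h2
    · intro i j hi1 hin hj1 hjk
      constructor
      · rcases Nat.lt_or_ge i 2 with hi2 | hi2
        · have hi : i = 1 := by omega
          subst hi
          rw [ext_Fmap n k v 1 j hin hjk, z1]
          simp only [Nat.sub_self]
          rw [extGrid_zero n k (Fmap n k v) 0 j (by omega)]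
          have := row1 j hj1 hjk
          linarith
        · rw [ext_Fmap n k v i j hin hjk, ext_Fmap n k v (i-1) j (by omega) hjk]
          have e : i - 1 - 1 = i - 2 := by omega
          rw [e]
          exact h3 i j hi2 hin hj1 hjk
      · rcases Nat.lt_or_ge j 2 with hj2 | hj2
        · have hj : j = 1 := by omega
          subst hj
          rw [ext_Fmap n k v i 1 hin hjk, z2]
          simp only [Nat.sub_self]
          rw [extGrid_zero n k (Fmap n k v) i 0 (by omega)]
          have := col1 i hi1 hin
          linarith
        · rw [ext_Fmap n k v i j hin hjk, ext_Fmap n k v i (j-1) hin (by omega)]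
          have e : j - 1 - 1 = j - 2 := by omega
          rw [e]
          exact h4 i j hi1 hin hj2 hjk
  · -- InjOn
    intro v _ w _ h
    rw [← Gmap_Fmap n k v, h, Gmap_Fmap]
  · -- SurjOn
    rintro f ⟨g1, g2, g3⟩
    refine ⟨Gmap n k f, ?_, Fmap_Gmap n k f⟩
    have E : ∀ i j : ℕ, i ≤ n - k → j ≤ k →
        extGrid n k (Gmap n k f) i j - extGrid n k (Gmap n k f) (i-1) (j-1)
          = extGrid n k f i j := by
      intro i j hi hj
      have := ext_Fmap n k (Gmap n k f) i j hi hj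
      rw [Fmap_Gmap n k f] at this
      linarith
    refine ⟨?_, ?_, ?_, ?_⟩
    · have := E 1 1 hnk hk
      simp only [Nat.sub_self] at this
      rw [extGrid_zero n k (Gmap n k f) 0 0 (by omega)] at this
      linarith
    · have := E (n-k) k le_rfl le_rfl
      linarith
    · intro i j hi2 hin hj1 hjk
      have e : i - 1 - 1 = i - 2 := by omega
      have E1 := E (i-1) j (by omega) hjk
      rw [e] at E1
      have E2 := E i j hin hjk
      have := (g3 i j (by omega) hin hj1 hjk).1
      linarith
    · intro i j hi1 hin hj2 hjk
      have e : j - 1 - 1 = j - 2 := by omega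
      have E1 := E i (j-1) hin (by omega)
      rw [e] at E1
      have E2 := E i j hin hjk
      have := (g3 i j hi1 hin (by omega) hjk).2
      linarith
end

section
/- For partitions λ contained in the (n−k)×k rectangle, define V(λ) ∈ Z^{(n−k)×k} by V(λ)_{i×j} = MaxDiag((i×j)\λ), the maximal number of boxes of the skew shape (i×j)\λ on any antidiagonal. Then the map λ ↦ V(λ) is injective on the set of partitions contained in the (n−k)×k rectangle. -/
/-- The skew diagram `(i×j) \ λ`: boxes of the `i × j` rectangle (top-left
justified, 0-based coordinates) not belonging to `λ`. -/
def skewRect (i j : ℕ) (lam : ℕ → ℕ) : Finset (ℕ × ℕ) :=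
  (Finset.range i ×ˢ Finset.range j).filter fun p => lam p.1 ≤ p.2

/-- `maxDiag S` is the maximal number of boxes of `S` lying on a single
antidiagonal (a slope `-1` line, i.e. boxes with a common value of `i + j`). -/
def maxDiag (S : Finset (ℕ × ℕ)) : ℕ :=
  (S.image fun p => p.1 + p.2).sup fun d => (S.filter fun p => p.1 + p.2 = d).card

/-- A partition fitting in an `(n-k) × k` rectangle. -/
def IsPartitionIn (n k : ℕ) (lam : ℕ → ℕ) : Prop :=
  (∀ i j, i ≤ j → lam j ≤ lam i) ∧ (∀ i, lam i ≤ k) ∧ ∀ i, n - k ≤ i → lam i = 0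

lemma maxDiag_pos_of_mem {S : Finset (ℕ × ℕ)} {p : ℕ × ℕ} (hp : p ∈ S) :
    1 ≤ maxDiag S := by
  have h1 : p ∈ S.filter fun q => q.1 + q.2 = p.1 + p.2 := by
    simp [Finset.mem_filter, hp]
  have hcard : 1 ≤ (S.filter fun q => q.1 + q.2 = p.1 + p.2).card :=
    Finset.card_pos.mpr ⟨p, h1⟩
  have hd : p.1 + p.2 ∈ S.image fun q => q.1 + q.2 :=
    Finset.mem_image_of_mem _ hp
  exact le_trans hcard (Finset.le_sup (f := fun d => (S.filter fun q => q.1 + q.2 = d).card) hd)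

lemma key (lam mu : ℕ → ℕ) (hmu : ∀ i j, i ≤ j → mu j ≤ mu i)
    (r : ℕ) (hr : lam r < mu r) :
    maxDiag (skewRect (r + 1) (lam r + 1) lam) ≠
      maxDiag (skewRect (r + 1) (lam r + 1) mu) := by
  have hmem : (r, lam r) ∈ skewRect (r + 1) (lam r + 1) lam := by
    simp [skewRect]
  have hempty : skewRect (r + 1) (lam r + 1) mu = ∅ := by
    ext p
    simp only [skewRect, Finset.mem_filter, Finset.mem_product, Finset.mem_range,
      Finset.notMem_empty, iff_false, not_and]
    intro h1 h2
    have : mu r ≤ mu p.1 := hmu p.1 r (Nat.lt_succ_iff.mp h1.1)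
    have h3 := h1.2
    omega
  rw [hempty]
  have h0 : maxDiag (∅ : Finset (ℕ × ℕ)) = 0 := by simp [maxDiag]
  have := maxDiag_pos_of_mem hmem
  omega

/-- The map `λ ↦ V(λ)`, `V(λ)_{i×j} = MaxDiag((i×j)\λ)`, is injective on the
set of partitions contained in the `(n-k) × k` rectangle. -/
theorem stmt6 (n k : ℕ) (hk : 1 ≤ k) (hkn : k < n) :
    Set.InjOn
      (fun lam => fun p : Fin (n - k) × Fin k =>
        maxDiag (skewRect (p.1.1 + 1) (p.2.1 + 1) lam))
      {lam : ℕ → ℕ | IsPartitionIn n k lam} := by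
  intro lam hlam mu hmu h
  obtain ⟨hlam_dec, hlam_k, hlam_z⟩ := hlam
  obtain ⟨hmu_dec, hmu_k, hmu_z⟩ := hmu
  by_contra hne
  obtain ⟨r, hr⟩ : ∃ r, lam r ≠ mu r := by
    by_contra hall
    push_neg at hall
    exact hne (funext hall)
  rcases Nat.lt_or_ge (lam r) (mu r) with hlt | hge
  · -- lam r < mu r
    have hrlt : r < n - k := by
      by_contra hc
      push_neg at hc
      have := hmu_z r hc
      omega
    have hjlt : lam r < k := lt_of_lt_of_le hlt (hmu_k r)
    have := congrFun h (⟨r, hrlt⟩, ⟨lam r, hjlt⟩)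
    exact key lam mu hmu_dec r hlt this
  · have hlt : mu r < lam r := lt_of_le_of_ne hge (Ne.symm hr)
    have hrlt : r < n - k := by
      by_contra hc
      push_neg at hc
      have := hlam_z r hc
      omega
    have hjlt : mu r < k := lt_of_lt_of_le hlt (hlam_k r)
    have := congrFun h (⟨r, hrlt⟩, ⟨mu r, hjlt⟩)
    exact key mu lam hlam_dec r hlt this.symm
end

section
/- Applying the map f_{i×j} = V_{i×j} − V_{(i−1)×(j−1)} to any GT tableau V produces an (n−k)×k array of 0's and 1's whose rows weakly increase left to right and whose columns weakly increase top to bottom. Conversely, every such 0/1-array arises from a unique GT tableau in this manner. -/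
/-- A GT tableau of shape `(n-k) × k`, encoded as an integer array on `ℕ × ℕ`
(1-based indices) which vanishes outside the grid (so in particular
`V_{0×j} = V_{i×0} = 0`), and which satisfies: `V_{i×j} ≤ V_{(i-1)×(j-1)} + 1`;
`V_{1×1} ≥ 0`; rows and columns weakly increase; and if `V_{i×j} > 0` then
`V_{(i+1)×(j+1)} = V_{i×j} + 1`. -/
def IsGTTableau (n k : ℕ) (V : ℕ → ℕ → ℤ) : Prop :=
  (∀ i j, ¬(1 ≤ i ∧ i ≤ n - k ∧ 1 ≤ j ∧ j ≤ k) → V i j = 0) ∧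
  (∀ i j, 1 ≤ i → i ≤ n - k → 1 ≤ j → j ≤ k → V i j ≤ V (i - 1) (j - 1) + 1) ∧
  0 ≤ V 1 1 ∧
  (∀ i j, 1 ≤ i → i ≤ n - k → 2 ≤ j → j ≤ k → V i (j - 1) ≤ V i j) ∧
  (∀ i j, 2 ≤ i → i ≤ n - k → 1 ≤ j → j ≤ k → V (i - 1) j ≤ V i j) ∧
  (∀ i j, 1 ≤ i → i + 1 ≤ n - k → 1 ≤ j → j + 1 ≤ k →
    0 < V i j → V (i + 1) (j + 1) = V i j + 1)

/-- An `(n-k) × k` array of `0`'s and `1`'s whose rows weakly increase left to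
right and whose columns weakly increase top to bottom (again encoded as
vanishing outside the grid). -/
def Is01Array (n k : ℕ) (f : ℕ → ℕ → ℤ) : Prop :=
  (∀ i j, ¬(1 ≤ i ∧ i ≤ n - k ∧ 1 ≤ j ∧ j ≤ k) → f i j = 0) ∧
  (∀ i j, 1 ≤ i → i ≤ n - k → 1 ≤ j → j ≤ k → f i j = 0 ∨ f i j = 1) ∧
  (∀ i j, 1 ≤ i → i ≤ n - k → 2 ≤ j → j ≤ k → f i (j - 1) ≤ f i j) ∧
  (∀ i j, 2 ≤ i → i ≤ n - k → 1 ≤ j → j ≤ k → f (i - 1) j ≤ f i j)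


namespace Stmt8Aux

/-- The inverse construction: build a tableau from a 0/1 array by summing
along diagonals. -/
def Vf (n k : ℕ) (f : ℕ → ℕ → ℤ) : ℕ → ℕ → ℤ
  | 0, _ => 0
  | (i+1), j =>
    if i + 1 ≤ n - k ∧ 1 ≤ j ∧ j ≤ k then f (i+1) j + Vf n k f i (j-1) else 0

lemma Vf_out (n k : ℕ) (f : ℕ → ℕ → ℤ) (i j : ℕ)
    (h : ¬(1 ≤ i ∧ i ≤ n - k ∧ 1 ≤ j ∧ j ≤ k)) : Vf n k f i j = 0 := by
  cases i with
  | zero => rfl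
  | succ i =>
    simp only [Vf]
    rw [if_neg]
    intro hc
    exact h ⟨Nat.le_add_left 1 i, hc.1, hc.2.1, hc.2.2⟩

lemma Vf_in (n k : ℕ) (f : ℕ → ℕ → ℤ) {i j : ℕ}
    (h1 : 1 ≤ i) (h2 : i ≤ n - k) (h3 : 1 ≤ j) (h4 : j ≤ k) :
    Vf n k f i j = f i j + Vf n k f (i-1) (j-1) := by
  obtain ⟨i, rfl⟩ : ∃ i', i = i' + 1 := ⟨i - 1, by omega⟩
  simp only [Vf, Nat.add_sub_cancel]
  rw [if_pos ⟨h2, h3, h4⟩]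

variable {n k : ℕ} {f : ℕ → ℕ → ℤ}

lemma f_nonneg (hf : Is01Array n k f) (i j : ℕ) : 0 ≤ f i j := by
  by_cases h : 1 ≤ i ∧ i ≤ n - k ∧ 1 ≤ j ∧ j ≤ k
  · rcases hf.2.1 i j h.1 h.2.1 h.2.2.1 h.2.2.2 with h' | h' <;> omega
  · rw [hf.1 i j h]

lemma f_le_one (hf : Is01Array n k f) {i j : ℕ}
    (h1 : 1 ≤ i) (h2 : i ≤ n - k) (h3 : 1 ≤ j) (h4 : j ≤ k) : f i j ≤ 1 := by
  rcases hf.2.1 i j h1 h2 h3 h4 with h' | h' <;> omega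

lemma Vf_nonneg (hf : Is01Array n k f) : ∀ i j, 0 ≤ Vf n k f i j := by
  intro i
  induction i with
  | zero => intro j; exact le_of_eq rfl
  | succ i ih =>
    intro j
    by_cases h : i + 1 ≤ n - k ∧ 1 ≤ j ∧ j ≤ k
    · rw [Vf_in n k f (Nat.le_add_left 1 i) h.1 h.2.1 h.2.2]
      have := f_nonneg hf (i+1) j
      have := ih (j-1)
      simp only [Nat.add_sub_cancel]
      omega
    · rw [Vf_out n k f _ _ (by tauto)]

lemma Vf_row (hf : Is01Array n k f) :
    ∀ i j, 2 ≤ j → j ≤ k → Vf n k f i (j-1) ≤ Vf n k f i j := by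
  intro i
  induction i with
  | zero => intro j _ _; exact le_of_eq rfl
  | succ i ih =>
    intro j hj2 hjk
    by_cases h : i + 1 ≤ n - k
    · rw [Vf_in n k f (Nat.le_add_left 1 i) h (by omega) (by omega),
        Vf_in n k f (Nat.le_add_left 1 i) h (by omega) hjk]
      have h1 : f (i+1) (j-1) ≤ f (i+1) j := hf.2.2.1 (i+1) j (by omega) h hj2 hjk
      have h2 : Vf n k f ((i+1)-1) ((j-1)-1) ≤ Vf n k f ((i+1)-1) (j-1) := by
        rcases Nat.lt_or_ge j 3 with h3 | h3
        · have hj : j = 2 := by omega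
          subst hj
          have : Vf n k f i 0 = 0 := Vf_out n k f i 0 (by omega)
          simp only [Nat.add_sub_cancel]
          norm_num [this]
          exact Vf_nonneg hf i 1
        · have := ih (j-1) (by omega) (by omega)
          simpa using this
      omega
    · rw [Vf_out n k f _ _ (by omega), Vf_out n k f _ _ (by omega)]

lemma Vf_col (hf : Is01Array n k f) :
    ∀ i j, i + 1 ≤ n - k → j ≤ k → Vf n k f i j ≤ Vf n k f (i+1) j := by
  intro i
  induction i with
  | zero =>
    intro j _ _
    rw [Vf_out n k f 0 j (by omega)]
    exact Vf_nonneg hf 1 j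
  | succ i ih =>
    intro j hi hjk
    rcases Nat.eq_zero_or_pos j with rfl | hj
    · rw [Vf_out n k f _ 0 (by omega), Vf_out n k f _ 0 (by omega)]
    · rw [Vf_in n k f (Nat.le_add_left 1 i) (by omega) hj hjk,
        Vf_in n k f (Nat.le_add_left 1 (i+1)) hi hj hjk]
      simp only [Nat.add_sub_cancel]
      rw [show i+1+1 = i+2 from rfl]
      have h1 : f (i+1) j ≤ f (i+2) j := by
        have := hf.2.2.2 (i+2) j (by omega) hi hj hjk
        simpa using this
      have h2 : Vf n k f i (j-1) ≤ Vf n k f (i+1) (j-1) :=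
        ih (j-1) (by omega) (by omega)
      omega

lemma Vf_eq_one (hf : Is01Array n k f) :
    ∀ i j, 1 ≤ i → i ≤ n - k → 1 ≤ j → j ≤ k → 0 < Vf n k f i j → f i j = 1 := by
  intro i
  induction i with
  | zero => intro j h; omega
  | succ i ih =>
    intro j _ h2 h3 h4 hpos
    rw [Vf_in n k f (Nat.le_add_left 1 i) h2 h3 h4] at hpos
    rcases hf.2.1 (i+1) j (by omega) h2 h3 h4 with h0 | h1
    · exfalso
      simp only [Nat.add_sub_cancel, h0] at hpos
      -- Vf i (j-1) > 0, so i ≥ 1, j ≥ 2, and f i (j-1) = 1 by ih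
      have hi1 : 1 ≤ i := by
        by_contra hi
        rw [Vf_out n k f i (j-1) (by omega)] at hpos; omega
      have hj2 : 2 ≤ j := by
        by_contra hj
        rw [Vf_out n k f i (j-1) (by omega)] at hpos; omega
      have hone : f i (j-1) = 1 := ih (j-1) hi1 (by omega) (by omega) (by omega) (by omega)
      have hr : f i (j-1) ≤ f i j := hf.2.2.1 i j hi1 (by omega) hj2 h4
      have hc : f i j ≤ f (i+1) j := by
        have := hf.2.2.2 (i+1) j (by omega) h2 h3 h4
        simpa using this
      omega
    · exact h1

lemma Vf_isGT (hk : 1 ≤ k) (hkn : k < n) (hf : Is01Array n k f) :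
    IsGTTableau n k (Vf n k f) := by
  have hnk : 1 ≤ n - k := by omega
  refine ⟨Vf_out n k f, ?_, ?_, ?_, ?_, ?_⟩
  · intro i j h1 h2 h3 h4
    rw [Vf_in n k f h1 h2 h3 h4]
    have := f_le_one hf h1 h2 h3 h4
    omega
  · rw [Vf_in n k f le_rfl hnk le_rfl hk]
    have := f_nonneg hf 1 1
    have : Vf n k f 0 0 = 0 := rfl
    simp only [Nat.sub_self]
    omega
  · intro i j h1 h2 h3 h4
    exact Vf_row hf i j h3 h4
  · intro i j h1 h2 h3 h4
    obtain ⟨i, rfl⟩ : ∃ i', i = i' + 1 := ⟨i - 1, by omega⟩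
    have := Vf_col hf i j h2 h4
    simpa using this
  · intro i j h1 h2 h3 h4 hpos
    rw [Vf_in n k f (by omega) (by omega) (by omega) h4]
    simp only [Nat.add_sub_cancel]
    have hone : f i j = 1 := Vf_eq_one hf i j h1 (by omega) h3 (by omega) hpos
    have hr : f i j ≤ f i (j+1) := by
      have := hf.2.2.1 i (j+1) h1 (by omega) (by omega) h4
      simpa using this
    have hc : f i (j+1) ≤ f (i+1) (j+1) := by
      have := hf.2.2.2 (i+1) (j+1) (by omega) h2 (by omega) h4
      simpa using this
    have hle : f (i+1) (j+1) ≤ 1 := f_le_one hf (by omega) h2 (by omega) h4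
    omega

-- Lemmas about GT tableaux
variable {V : ℕ → ℕ → ℤ}

lemma gt_nonneg (hV : IsGTTableau n k V) : ∀ i j, 0 ≤ V i j := by
  have row1 : ∀ j, j ≤ k → 0 ≤ V 1 j := by
    intro j
    induction j with
    | zero =>
      intro _
      rw [hV.1 1 0 (by omega)]
    | succ j ih =>
      intro hjk
      by_cases hn : 1 ≤ n - k
      · rcases Nat.eq_zero_or_pos j with rfl | hj
        · exact hV.2.2.1
        · have hmono := hV.2.2.2.1 1 (j+1) le_rfl hn (by omega) hjk
          simp only [Nat.add_sub_cancel] at hmono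
          have := ih (by omega)
          omega
      · rw [hV.1 1 (j+1) (by omega)]
  intro i j
  by_cases hgrid : 1 ≤ i ∧ i ≤ n - k ∧ 1 ≤ j ∧ j ≤ k
  · obtain ⟨h1, h2, h3, h4⟩ := hgrid
    clear h1
    induction i with
    | zero => rw [hV.1 0 j (by omega)]
    | succ i ih =>
      rcases Nat.eq_zero_or_pos i with rfl | hi
      · exact row1 j h4
      · have hstep := hV.2.2.2.2.1 (i+1) j (by omega) h2 h3 h4
        simp only [Nat.add_sub_cancel] at hstep
        have := ih (by omega)
        omega
  · rw [hV.1 i j hgrid]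

lemma gt_step (hV : IsGTTableau n k V) {i j : ℕ}
    (h1 : 1 ≤ i) (h2 : i ≤ n - k) (h3 : 1 ≤ j) (h4 : j ≤ k)
    (hpos : 0 < V i j) : V i j = V (i-1) (j-1) + 1 := by
  have hub := hV.2.1 i j h1 h2 h3 h4
  by_cases hc : 2 ≤ i ∧ 2 ≤ j
  · by_cases hp : 0 < V (i-1) (j-1)
    · have := hV.2.2.2.2.2 (i-1) (j-1) (by omega) (by omega) (by omega) (by omega) hp
      have e1 : i - 1 + 1 = i := by omega
      have e2 : j - 1 + 1 = j := by omega
      rw [e1, e2] at this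
      omega
    · have := gt_nonneg hV (i-1) (j-1)
      omega
  · have hz : V (i-1) (j-1) = 0 := hV.1 (i-1) (j-1) (by omega)
    omega

lemma gt_diag_mono (hV : IsGTTableau n k V) {i j : ℕ}
    (h1 : 1 ≤ i) (h2 : i ≤ n - k) (h3 : 1 ≤ j) (h4 : j ≤ k) :
    V (i-1) (j-1) ≤ V i j := by
  by_cases hc : 2 ≤ i ∧ 2 ≤ j
  · have hr : V (i-1) (j-1) ≤ V (i-1) j := hV.2.2.2.1 (i-1) j (by omega) (by omega) hc.2 h4
    have hcol : V (i-1) j ≤ V i j := hV.2.2.2.2.1 i j hc.1 h2 h3 h4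
    omega
  · have hz : V (i-1) (j-1) = 0 := hV.1 (i-1) (j-1) (by omega)
    have := gt_nonneg hV i j
    omega

end Stmt8Aux

/-- The map `f_{i×j} = V_{i×j} - V_{(i-1)×(j-1)}` sends GT tableaux
bijectively onto `0/1`-arrays with weakly increasing rows and columns. -/
theorem stmt8 (n k : ℕ) (hk : 1 ≤ k) (hkn : k < n) :
    Set.BijOn
      (fun (V : ℕ → ℕ → ℤ) (i j : ℕ) =>
        if 1 ≤ i ∧ i ≤ n - k ∧ 1 ≤ j ∧ j ≤ k then V i j - V (i - 1) (j - 1) else 0)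
      {V | IsGTTableau n k V} {f | Is01Array n k f} := by
  open Stmt8Aux in
  refine ⟨?_, ?_, ?_⟩
  · -- MapsTo
    intro V hV
    simp only [Set.mem_setOf_eq] at hV ⊢
    refine ⟨?_, ?_, ?_, ?_⟩
    · intro i j h
      simp only [if_neg h]
    · intro i j h1 h2 h3 h4
      simp only [if_pos (show 1 ≤ i ∧ i ≤ n - k ∧ 1 ≤ j ∧ j ≤ k by omega)]
      have hub := hV.2.1 i j h1 h2 h3 h4
      have hlb := gt_diag_mono hV h1 h2 h3 h4
      omega
    · -- rows weakly increase
      intro i j h1 h2 hj2 h4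
      simp only [if_pos (show 1 ≤ i ∧ i ≤ n - k ∧ 1 ≤ j - 1 ∧ j - 1 ≤ k by omega),
        if_pos (show 1 ≤ i ∧ i ≤ n - k ∧ 1 ≤ j ∧ j ≤ k by omega)]
      by_cases h0 : V i (j-1) ≤ V (i-1) (j-1-1)
      · have hlb := gt_diag_mono hV h1 h2 (by omega : 1 ≤ j) h4
        have hub := hV.2.1 i (j-1) h1 h2 (by omega) (by omega)
        omega
      · have hnn := gt_nonneg hV (i-1) (j-1-1)
        have hrm : V i (j-1) ≤ V i j := hV.2.2.2.1 i j h1 h2 hj2 h4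
        have hstep := gt_step hV h1 h2 (by omega : 1 ≤ j) h4 (by omega)
        have hub := hV.2.1 i (j-1) h1 h2 (by omega) (by omega)
        omega
    · -- columns weakly increase
      intro i j hi2 h2 h3 h4
      simp only [if_pos (show 1 ≤ i - 1 ∧ i - 1 ≤ n - k ∧ 1 ≤ j ∧ j ≤ k by omega),
        if_pos (show 1 ≤ i ∧ i ≤ n - k ∧ 1 ≤ j ∧ j ≤ k by omega)]
      by_cases h0 : V (i-1) j ≤ V (i-1-1) (j-1)
      · have hlb := gt_diag_mono hV (by omega : 1 ≤ i) h2 h3 h4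
        have hub := hV.2.1 (i-1) j (by omega) (by omega) h3 h4
        omega
      · have hnn := gt_nonneg hV (i-1-1) (j-1)
        have hcm : V (i-1) j ≤ V i j := hV.2.2.2.2.1 i j hi2 h2 h3 h4
        have hstep := gt_step hV (by omega : 1 ≤ i) h2 h3 h4 (by omega)
        have hub := hV.2.1 (i-1) j (by omega) (by omega) h3 h4
        omega
  · -- InjOn
    intro V hV W hW heq
    simp only [Set.mem_setOf_eq] at hV hW
    have heq' : ∀ i j, (if 1 ≤ i ∧ i ≤ n - k ∧ 1 ≤ j ∧ j ≤ k
        then V i j - V (i-1) (j-1) else 0)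
        = (if 1 ≤ i ∧ i ≤ n - k ∧ 1 ≤ j ∧ j ≤ k
        then W i j - W (i-1) (j-1) else 0) := by
      intro i j
      have := congrFun (congrFun heq i) j
      simpa using this
    have claim : ∀ i j, V i j = W i j := by
      intro i
      induction i with
      | zero =>
        intro j
        rw [hV.1 0 j (by omega), hW.1 0 j (by omega)]
      | succ i ih =>
        intro j
        by_cases hg : 1 ≤ i + 1 ∧ i + 1 ≤ n - k ∧ 1 ≤ j ∧ j ≤ k
        · have h := heq' (i+1) j
          rw [if_pos hg, if_pos hg] at h
          simp only [Nat.add_sub_cancel] at h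
          have := ih (j-1)
          omega
        · rw [hV.1 _ _ hg, hW.1 _ _ hg]
    exact funext fun i => funext fun j => claim i j
  · -- SurjOn
    intro f hf
    simp only [Set.mem_setOf_eq] at hf
    refine ⟨Vf n k f, Vf_isGT hk hkn hf, ?_⟩
    funext i j
    by_cases hg : 1 ≤ i ∧ i ≤ n - k ∧ 1 ≤ j ∧ j ≤ k
    · simp only [if_pos hg]
      rw [Vf_in n k f hg.1 hg.2.1 hg.2.2.1 hg.2.2.2]
      ring
    · simp only [if_neg hg]
      exact (hf.1 i j hg).symm
end

section
/- The number of GT tableaux of shape (n−k)×k equals binomial(n, k). -/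
namespace GTAux

/-- The tableau built from a sequence `c` of column zero-counts. -/
def gtV (m k : ℕ) (c : ℕ → ℕ) : ℕ → ℕ → ℤ
  | 0, _ => 0
  | (i+1), j =>
      if i + 1 ≤ m ∧ 1 ≤ j ∧ j ≤ k ∧ c j < i + 1 then gtV m k c i (j - 1) + 1 else 0

lemma gtV_zero (m k : ℕ) (c : ℕ → ℕ) (j : ℕ) : gtV m k c 0 j = 0 := rfl

lemma gtV_succ (m k : ℕ) (c : ℕ → ℕ) (i j : ℕ) :
    gtV m k c (i + 1) j =
      if i + 1 ≤ m ∧ 1 ≤ j ∧ j ≤ k ∧ c j < i + 1 then gtV m k c i (j - 1) + 1 else 0 := rfl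

lemma gtV_nonneg (m k : ℕ) (c : ℕ → ℕ) : ∀ i j, 0 ≤ gtV m k c i j := by
  intro i
  induction i with
  | zero => intro j; simp [gtV_zero]
  | succ i ih =>
      intro j
      rw [gtV_succ]
      split
      · have := ih (j - 1); omega
      · exact le_refl 0

lemma gtV_outside (m k : ℕ) (c : ℕ → ℕ) (i j : ℕ)
    (h : ¬(1 ≤ i ∧ i ≤ m ∧ 1 ≤ j ∧ j ≤ k)) : gtV m k c i j = 0 := by
  cases i with
  | zero => rfl
  | succ i =>
      rw [gtV_succ]
      split
      · rename_i hc; omega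
      · rfl

lemma gtV_eq_zero_iff (m k : ℕ) (c : ℕ → ℕ) (i j : ℕ)
    (hi1 : 1 ≤ i) (hi2 : i ≤ m) (hj1 : 1 ≤ j) (hj2 : j ≤ k) :
    gtV m k c i j = 0 ↔ i ≤ c j := by
  cases i with
  | zero => omega
  | succ i =>
      rw [gtV_succ]
      split
      · rename_i hc
        have := gtV_nonneg m k c i (j - 1)
        constructor
        · intro h; omega
        · intro h; omega
      · rename_i hc
        constructor
        · intro _; omega
        · intro _; rfl

section Mono

variable (m k : ℕ) (c : ℕ → ℕ)
variable (hmono : ∀ j j', 1 ≤ j → j ≤ j' → j' ≤ k → c j' ≤ c j)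

include hmono

lemma gtV_row_mono : ∀ i j, 1 ≤ j → j + 1 ≤ k → gtV m k c i j ≤ gtV m k c i (j + 1) := by
  intro i
  induction i with
  | zero => intro j _ _; rw [gtV_zero, gtV_zero]
  | succ i ih =>
      intro j hj1 hj2
      by_cases h : i + 1 ≤ m ∧ 1 ≤ j ∧ j ≤ k ∧ c j < i + 1
      · have hc' : c (j + 1) ≤ c j := hmono j (j + 1) hj1 (by omega) (by omega)
        rw [gtV_succ, if_pos h, gtV_succ, if_pos (by omega)]
        have hstep : gtV m k c i (j - 1) ≤ gtV m k c i (j + 1 - 1) := by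
          rcases Nat.lt_or_ge j 2 with hj | hj
          · have hj1' : j = 1 := by omega
            subst hj1'
            simpa [gtV_outside m k c i 0 (by omega)] using gtV_nonneg m k c i 1
          · have := ih (j - 1) (by omega) (by omega)
            have hrw : j - 1 + 1 = j := by omega
            rw [hrw] at this
            have hrw2 : j + 1 - 1 = j := by omega
            rw [hrw2]
            exact this
        omega
      · rw [gtV_succ, if_neg h]
        exact gtV_nonneg m k c (i + 1) (j + 1)

lemma gtV_col_mono : ∀ i j, i + 1 ≤ m → 1 ≤ j → j ≤ k → gtV m k c i j ≤ gtV m k c (i + 1) j := by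
  intro i
  induction i with
  | zero => intro j _ _ _; rw [gtV_zero]; exact gtV_nonneg m k c 1 j
  | succ i ih =>
      intro j him hj1 hj2
      by_cases h : i + 1 ≤ m ∧ 1 ≤ j ∧ j ≤ k ∧ c j < i + 1
      · rw [gtV_succ, if_pos h]
        rw [show i + 1 + 1 = (i + 1) + 1 from rfl, gtV_succ, if_pos (by omega)]
        have hstep : gtV m k c i (j - 1) ≤ gtV m k c (i + 1) (j - 1) := by
          rcases Nat.lt_or_ge j 2 with hj | hj
          · have : j = 1 := by omega
            subst this
            simp [gtV_outside m k c i 0 (by omega), gtV_outside m k c (i+1) 0 (by omega)]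
          · exact ih (j - 1) (by omega) (by omega) (by omega)
        omega
      · rw [gtV_succ, if_neg h]
        exact gtV_nonneg m k c (i + 1 + 1) j

lemma gtV_isGT (n : ℕ) (hm : m = n - k) : IsGTTableau n k (gtV m k c) := by
  subst hm
  set m := n - k with hm
  refine ⟨?_, ?_, ?_, ?_, ?_, ?_⟩
  · intro i j h; exact gtV_outside m k c i j h
  · intro i j hi1 hi2 hj1 hj2
    cases i with
    | zero => omega
    | succ i =>
        rw [gtV_succ]
        have hrw : i + 1 - 1 = i := by omega
        rw [hrw]
        split
        · exact le_refl _
        · have := gtV_nonneg m k c i (j - 1); omega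
  · exact gtV_nonneg m k c 1 1
  · intro i j hi1 hi2 hj1 hj2
    have := gtV_row_mono m k c hmono i (j - 1) (by omega) (by omega)
    have hrw : j - 1 + 1 = j := by omega
    rwa [hrw] at this
  · intro i j hi1 hi2 hj1 hj2
    have := gtV_col_mono m k c hmono (i - 1) j (by omega) (by omega) (by omega)
    have hrw : i - 1 + 1 = i := by omega
    rwa [hrw] at this
  · intro i j hi1 hi2 hj1 hj2 hpos
    cases i with
    | zero => omega
    | succ i =>
        rw [gtV_succ] at hpos
        have hcond : i + 1 ≤ m ∧ 1 ≤ j ∧ j ≤ k ∧ c j < i + 1 := by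
          by_contra h
          rw [if_neg h] at hpos; omega
        have hc' : c (j + 1) ≤ c j := hmono j (j + 1) (by omega) (by omega) (by omega)
        rw [if_pos hcond] at hpos
        conv_lhs => rw [gtV_succ]
        rw [if_pos (show i + 1 + 1 ≤ m ∧ 1 ≤ j + 1 ∧ j + 1 ≤ k ∧ c (j + 1) < i + 1 + 1 by omega)]
        simp only [Nat.add_sub_cancel]

end Mono

section Tableau

variable {n k : ℕ} {V : ℕ → ℕ → ℤ} (hV : IsGTTableau n k V)

include hV

lemma tab_col_chain : ∀ i i' j, 1 ≤ i → i ≤ i' → i' ≤ n - k → 1 ≤ j → j ≤ k →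
    V i j ≤ V i' j := by
  intro i i' j hi hii' hi' hj1 hj2
  induction i' with
  | zero => omega
  | succ i' ih =>
      rcases Nat.lt_or_ge i (i' + 1) with h | h
      · have h1 : V i j ≤ V i' j := ih (by omega) (by omega)
        have h2 : V (i' + 1 - 1) j ≤ V (i' + 1) j :=
          hV.2.2.2.2.1 (i' + 1) j (by omega) (by omega) (by omega) (by omega)
        simp only [Nat.add_sub_cancel] at h2
        omega
      · have : i = i' + 1 := by omega
        subst this; exact le_refl _

lemma tab_row_chain : ∀ i j j', 1 ≤ i → i ≤ n - k → 1 ≤ j → j ≤ j' → j' ≤ k →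
    V i j ≤ V i j' := by
  intro i j j' hi1 hi2 hj hjj' hj'
  induction j' with
  | zero => omega
  | succ j' ih =>
      rcases Nat.lt_or_ge j (j' + 1) with h | h
      · have h1 : V i j ≤ V i j' := ih (by omega) (by omega)
        have h2 : V i (j' + 1 - 1) ≤ V i (j' + 1) :=
          hV.2.2.2.1 i (j' + 1) (by omega) (by omega) (by omega) (by omega)
        simp only [Nat.add_sub_cancel] at h2
        omega
      · have : j = j' + 1 := by omega
        subst this; exact le_refl _

lemma tab_nonneg : ∀ i j, 0 ≤ V i j := by
  intro i j
  by_cases h : 1 ≤ i ∧ i ≤ n - k ∧ 1 ≤ j ∧ j ≤ k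
  · have h1 : V 1 1 ≤ V 1 j :=
      tab_row_chain hV 1 1 j (by omega) (by omega) (by omega) (by omega) (by omega)
    have h2 : V 1 j ≤ V i j :=
      tab_col_chain hV 1 i j (by omega) (by omega) (by omega) (by omega) (by omega)
    have h3 := hV.2.2.1
    omega
  · rw [hV.1 i j h]

/-- Main reconstruction lemma: a tableau whose zero set in each column is the initial
segment of length `c j` coincides with `gtV`. -/
lemma tab_eq_gtV (c : ℕ → ℕ)
    (hiff : ∀ i j, 1 ≤ i → i ≤ n - k → 1 ≤ j → j ≤ k → (V i j = 0 ↔ i ≤ c j)) :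
    ∀ i j, V i j = gtV (n - k) k c i j := by
  intro i
  induction i with
  | zero =>
      intro j
      rw [gtV_zero, hV.1 0 j (by omega)]
  | succ i ih =>
      intro j
      by_cases h : i + 1 ≤ n - k ∧ 1 ≤ j ∧ j ≤ k ∧ c j < i + 1
      · rw [gtV_succ, if_pos h, ← ih (j - 1)]
        -- V (i+1) j is positive
        have hpos : 0 < V (i + 1) j := by
          have hne : V (i + 1) j ≠ 0 := by
            intro h0
            have := (hiff (i + 1) j (by omega) (by omega) (by omega) (by omega)).1 h0
            omega
          have := tab_nonneg hV (i + 1) j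
          omega
        by_cases h0 : V i (j - 1) = 0
        · -- then V (i+1) j = 1
          have hle : V (i + 1) j ≤ V (i + 1 - 1) (j - 1) + 1 :=
            hV.2.1 (i + 1) j (by omega) (by omega) (by omega) (by omega)
          simp only [Nat.add_sub_cancel] at hle
          rw [h0] at hle ⊢
          omega
        · -- V i (j-1) > 0, so (i, j-1) is in range and diag rule applies
          have hrange : 1 ≤ i ∧ i ≤ n - k ∧ 1 ≤ j - 1 ∧ j - 1 ≤ k := by
            by_contra hcon
            exact h0 (hV.1 i (j - 1) hcon)
          have hpos' : 0 < V i (j - 1) := by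
            have := tab_nonneg hV i (j - 1)
            rcases this.lt_or_eq with h' | h'
            · exact h'
            · exact absurd h'.symm h0
          have := hV.2.2.2.2.2 i (j - 1) (by omega) (by omega) (by omega) (by omega) hpos'
          have hrw : j - 1 + 1 = j := by omega
          rw [hrw] at this
          exact this
      · rw [gtV_succ, if_neg h]
        by_cases hr : 1 ≤ i + 1 ∧ i + 1 ≤ n - k ∧ 1 ≤ j ∧ j ≤ k
        · -- in range but i + 1 ≤ c j
          have : i + 1 ≤ c j := by omega
          exact (hiff (i + 1) j (by omega) (by omega) (by omega) (by omega)).2 this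
        · exact hV.1 (i + 1) j hr

end Tableau

/-- Column zero counts of a tableau. -/
noncomputable def cOf (m k : ℕ) (V : ℕ → ℕ → ℤ) (j : ℕ) : ℕ :=
  if 1 ≤ j ∧ j ≤ k then ((Finset.Icc 1 m).filter (fun i => V i j = 0)).card else 0

section COf

variable {n k : ℕ} {V : ℕ → ℕ → ℤ} (hV : IsGTTableau n k V)

include hV

lemma cOf_le (j : ℕ) : cOf (n - k) k V j ≤ n - k := by
  unfold cOf
  split
  · calc ((Finset.Icc 1 (n - k)).filter (fun i => V i j = 0)).card
        ≤ (Finset.Icc 1 (n - k)).card := Finset.card_filter_le _ _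
      _ = n - k := by rw [Nat.card_Icc]; omega
  · omega

lemma cOf_iff (i j : ℕ) (hi1 : 1 ≤ i) (hi2 : i ≤ n - k) (hj1 : 1 ≤ j) (hj2 : j ≤ k) :
    V i j = 0 ↔ i ≤ cOf (n - k) k V j := by
  unfold cOf
  rw [if_pos ⟨hj1, hj2⟩]
  set S := (Finset.Icc 1 (n - k)).filter (fun i => V i j = 0) with hS
  have hdown : ∀ a b, a ∈ S → 1 ≤ b → b ≤ a → b ∈ S := by
    intro a b ha hb1 hba
    rw [hS, Finset.mem_filter, Finset.mem_Icc] at ha ⊢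
    refine ⟨⟨hb1, by omega⟩, ?_⟩
    have h1 : V b j ≤ V a j :=
      tab_col_chain hV b a j hb1 hba (by omega) hj1 hj2
    have h2 := tab_nonneg hV b j
    have := ha.2
    omega
  rcases S.eq_empty_or_nonempty with hemp | hne
  · rw [hemp]
    simp only [Finset.card_empty]
    constructor
    · intro h0
      have : i ∈ S := by
        rw [hS, Finset.mem_filter, Finset.mem_Icc]; exact ⟨⟨hi1, hi2⟩, h0⟩
      rw [hemp] at this; simp at this
    · omega
  · set M := S.max' hne with hM
    have hSeq : S = Finset.Icc 1 M := by
      apply Finset.ext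
      intro a
      rw [Finset.mem_Icc]
      constructor
      · intro ha
        have h1 : 1 ≤ a := by
          have := Finset.mem_filter.1 ha
          have := Finset.mem_Icc.1 this.1
          omega
        exact ⟨h1, S.le_max' a ha⟩
      · intro ⟨h1, h2⟩
        exact hdown M a (S.max'_mem hne) h1 h2
    have hcard : S.card = M := by rw [hSeq, Nat.card_Icc]; omega
    rw [hcard]
    constructor
    · intro h0
      have : i ∈ S := by
        rw [hS, Finset.mem_filter, Finset.mem_Icc]; exact ⟨⟨hi1, hi2⟩, h0⟩
      rw [hSeq, Finset.mem_Icc] at this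
      omega
    · intro hle
      have : i ∈ S := by
        rw [hSeq, Finset.mem_Icc]; omega
      exact (Finset.mem_filter.1 this).2

lemma cOf_anti (j j' : ℕ) (hj1 : 1 ≤ j) (hjj' : j ≤ j') (hj' : j' ≤ k) :
    cOf (n - k) k V j' ≤ cOf (n - k) k V j := by
  set a := cOf (n - k) k V j' with ha
  rcases Nat.eq_zero_or_pos a with h0 | hpos
  · omega
  · have hale : a ≤ n - k := cOf_le hV j'
    have hz' : V a j' = 0 :=
      (cOf_iff hV a j' (by omega) hale (by omega) hj').2 (le_refl a)
    have hle : V a j ≤ V a j' :=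
      tab_row_chain hV a j j' (by omega) hale hj1 hjj' hj'
    have hnn := tab_nonneg hV a j
    have hz : V a j = 0 := by omega
    exact (cOf_iff hV a j (by omega) hale hj1 (by omega)).1 hz

end COf

lemma cOf_gtV (m k : ℕ) (c : ℕ → ℕ)
    (hbound : ∀ j, 1 ≤ j → j ≤ k → c j ≤ m)
    (hzero : ∀ j, ¬(1 ≤ j ∧ j ≤ k) → c j = 0) :
    cOf m k (gtV m k c) = c := by
  funext j
  unfold cOf
  by_cases hj : 1 ≤ j ∧ j ≤ k
  · rw [if_pos hj]
    have hfe : (Finset.Icc 1 m).filter (fun i => gtV m k c i j = 0) = Finset.Icc 1 (c j) := by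
      apply Finset.ext
      intro a
      rw [Finset.mem_filter, Finset.mem_Icc, Finset.mem_Icc]
      constructor
      · intro ⟨⟨h1, h2⟩, h3⟩
        have := (gtV_eq_zero_iff m k c a j h1 h2 hj.1 hj.2).1 h3
        omega
      · intro ⟨h1, h2⟩
        have hcb := hbound j hj.1 hj.2
        refine ⟨⟨h1, by omega⟩, ?_⟩
        exact (gtV_eq_zero_iff m k c a j h1 (by omega) hj.1 hj.2).2 h2
    rw [hfe, Nat.card_Icc]
    omega
  · rw [if_neg hj, hzero j hj]

/-- `f t + (t' - t) ≤ f t'` for a strictly monotone map on `Fin k`. -/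
lemma strictMono_fin_gap {k n : ℕ} {f : Fin k → Fin n} (hf : StrictMono f) :
    ∀ d : ℕ, ∀ t t' : Fin k, (t' : ℕ) = (t : ℕ) + d → (f t : ℕ) + d ≤ (f t' : ℕ) := by
  intro d
  induction d with
  | zero =>
      intro t t' h
      have : t = t' := Fin.ext (by omega)
      subst this; omega
  | succ d ih =>
      intro t t' h
      have hu : (t : ℕ) + d < k := by
        have := t'.isLt; omega
      set u : Fin k := ⟨(t : ℕ) + d, hu⟩ with hudef
      have h1 : (f t : ℕ) + d ≤ (f u : ℕ) := ih t u rfl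
      have h2 : f u < f t' := hf (by rw [Fin.lt_def]; simp [hudef]; omega)
      rw [Fin.lt_def] at h2
      omega

end GTAux

open GTAux

/-- The number of GT tableaux of shape `(n-k) × k` equals `binomial n k`. -/
theorem stmt9 (n k : ℕ) (hk : 1 ≤ k) (hkn : k < n) :
    Set.ncard {V : ℕ → ℕ → ℤ | IsGTTableau n k V} = Nat.choose n k := by
  classical
  set m := n - k with hm
  have hmk : m + k = n := by omega
  have hm1 : 1 ≤ m := by omega
  -- B: the type of valid column-zero-count sequences
  let BP : (ℕ → ℕ) → Prop := fun c =>
    (∀ j, ¬(1 ≤ j ∧ j ≤ k) → c j = 0) ∧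
    (∀ j, 1 ≤ j → j ≤ k → c j ≤ m) ∧
    (∀ j j', 1 ≤ j → j ≤ j' → j' ≤ k → c j' ≤ c j)
  -- Equiv between tableaux and B
  have e1 : {V : ℕ → ℕ → ℤ | IsGTTableau n k V} ≃ {c : ℕ → ℕ // BP c} :=
    { toFun := fun V => ⟨cOf m k V.1, by
        have hV : IsGTTableau n k V.1 := V.2
        refine ⟨?_, ?_, ?_⟩
        · intro j hj; unfold cOf; rw [if_neg hj]
        · intro j h1 h2; exact cOf_le hV j
        · intro j j' h1 h2 h3; exact cOf_anti hV j j' h1 h2 h3⟩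
      invFun := fun c => ⟨gtV m k c.1, gtV_isGT m k c.1 c.2.2.2 n rfl⟩
      left_inv := by
        intro V
        have hV : IsGTTableau n k V.1 := V.2
        apply Subtype.ext
        funext i j
        exact (tab_eq_gtV hV (cOf m k V.1)
          (fun i j h1 h2 h3 h4 => cOf_iff hV i j h1 h2 h3 h4) i j).symm
      right_inv := by
        intro c
        apply Subtype.ext
        exact cOf_gtV m k c.1 c.2.2.1 c.2.1 }
  -- Equiv between B and strictly monotone maps
  have e2 : {c : ℕ → ℕ // BP c} ≃ {f : Fin k → Fin n // StrictMono f} :=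
    { toFun := fun c =>
        ⟨fun t => ⟨c.1 (k - (t : ℕ)) + (t : ℕ), by
            have hb := c.2.2.1 (k - (t : ℕ)) (by omega) (by omega)
            have := t.isLt
            omega⟩, by
          intro t t' htt'
          rw [Fin.lt_def] at htt' ⊢
          simp only
          have hanti := c.2.2.2 (k - (t' : ℕ)) (k - (t : ℕ)) (by omega) (by omega) (by omega)
          omega⟩
      invFun := fun f =>
        ⟨fun j => if h : 1 ≤ j ∧ j ≤ k then
            (f.1 ⟨k - j, by omega⟩ : ℕ) - (k - j) else 0, by
          have hle : ∀ t : Fin k, (t : ℕ) ≤ (f.1 t : ℕ) := by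
            intro t
            have := strictMono_fin_gap f.2 (t : ℕ) ⟨0, by omega⟩ t (by simp)
            omega
          have hub : ∀ t : Fin k, (f.1 t : ℕ) + (k - 1 - (t : ℕ)) ≤ n - 1 := by
            intro t
            have hlt := t.isLt
            have := strictMono_fin_gap f.2 (k - 1 - (t : ℕ)) t ⟨k - 1, by omega⟩ (by simp only [Fin.val_mk]; omega)
            have := (f.1 ⟨k - 1, by omega⟩).isLt
            omega
          refine ⟨?_, ?_, ?_⟩
          · intro j hj; dsimp only; rw [dif_neg hj]
          · intro j h1 h2
            dsimp only
            rw [dif_pos ⟨h1, h2⟩]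
            have := hub ⟨k - j, by omega⟩
            simp only at this
            omega
          · intro j j' h1 h2 h3
            dsimp only
            rw [dif_pos (show 1 ≤ j' ∧ j' ≤ k by omega), dif_pos (show 1 ≤ j ∧ j ≤ k by omega)]
            have hgap := strictMono_fin_gap f.2 ((k - j) - (k - j'))
              ⟨k - j', by omega⟩ ⟨k - j, by omega⟩ (by simp; omega)
            have := hle ⟨k - j', by omega⟩
            simp only at hgap this
            omega⟩
      left_inv := by
        intro c
        apply Subtype.ext
        funext j
        by_cases hj : 1 ≤ j ∧ j ≤ k
        · simp only [dif_pos hj, Fin.val_mk]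
          have hrw : k - (k - j) = j := by omega
          rw [hrw]
          omega
        · dsimp only
          rw [dif_neg hj, (c.2.1 j hj).symm]
      right_inv := by
        intro f
        apply Subtype.ext
        funext t
        apply Fin.ext
        have ht := t.isLt
        have hrw2 : k - (k - (t : ℕ)) = (t : ℕ) := by omega
        simp only [dif_pos (show 1 ≤ k - (t : ℕ) ∧ k - (t : ℕ) ≤ k by omega), Fin.val_mk,
          hrw2, Fin.eta]
        have hle : ((t : ℕ)) ≤ (f.1 t : ℕ) := by
          have := strictMono_fin_gap f.2 (t : ℕ) ⟨0, by omega⟩ t (by simp)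
          omega
        omega }
  -- Equiv between strictly monotone maps and k-subsets
  have e3 : {f : Fin k → Fin n // StrictMono f} ≃ {s : Finset (Fin n) // s.card = k} :=
    { toFun := fun f => ⟨Finset.univ.image f.1, by
        rw [Finset.card_image_of_injective _ f.2.injective, Finset.card_univ,
          Fintype.card_fin]⟩
      invFun := fun s => ⟨(s.1.orderEmbOfFin s.2 : Fin k → Fin n),
        (s.1.orderEmbOfFin s.2).strictMono⟩
      left_inv := by
        intro f
        apply Subtype.ext
        exact (Finset.orderEmbOfFin_unique _
          (fun x => Finset.mem_image_of_mem _ (Finset.mem_univ x)) f.2).symm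
      right_inv := by
        intro s
        apply Subtype.ext
        apply Finset.coe_injective
        rw [Finset.coe_image, Finset.coe_univ, Set.image_univ]
        exact Finset.range_orderEmbOfFin s.1 s.2 }
  have e : {V : ℕ → ℕ → ℤ | IsGTTableau n k V} ≃ {s : Finset (Fin n) // s.card = k} :=
    (e1.trans e2).trans e3
  rw [← Nat.card_coe_set_eq, Nat.card_congr e, Nat.card_eq_fintype_card,
    Fintype.card_finset_len, Fintype.card_fin]
end

section
/- Let Q be a quiver with no loops or 2-cycles and let v ∈ Z^{Q₀} be balanced at every mutable vertex, i.e., Σ_{μ→ν} v_μ = Σ_{ν→μ'} v_{μ'} for every mutable vertex ν. Then for any mutable vertex ν, the X-cluster mutation of the Laurent monomial x^v at ν is again a Laurent monomial x^{v'}, where v'_η = v_η for η ≠ ν and v'_ν = (Σ_{μ→ν} v_μ) − v_ν; moreover v' is balanced at every mutable vertex of the mutated quiver Mut_ν(Q). -/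
/-- Fomin–Zelevinsky matrix mutation at the vertex `v` of the skew-symmetric
exchange matrix `B` of a quiver without loops or 2-cycles. -/
def mutMat {ι : Type*} [DecidableEq ι] (B : ι → ι → ℤ) (v : ι) : ι → ι → ℤ :=
  fun l m =>
    if l = v ∨ m = v then -B l m
    else B l m + max (B l v) 0 * max (B v m) 0 - max (-B l v) 0 * max (-B v m) 0

/-- `v` is balanced at the vertex `η` of the quiver with exchange matrix `B`:
`∑_{μ→η} v_μ = ∑_{η→μ} v_μ` (arrows counted with multiplicity;
the number of arrows `μ → η` is `max (B μ η) 0`). -/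
def IsBalancedAt {ι : Type*} [Fintype ι] (B : ι → ι → ℤ) (w : ι → ℤ) (η : ι) : Prop :=
  ∑ μ, max (B μ η) 0 * w μ = ∑ μ, max (B η μ) 0 * w μ

lemma max_sub_max (a : ℤ) : max a 0 - max (-a) 0 = a := by
  rcases le_total a 0 with h | h
  · rw [max_eq_right h, max_eq_left (by linarith)]; ring
  · rw [max_eq_left h, max_eq_right (by linarith)]; ring

lemma bal_iff {ι : Type*} [Fintype ι] (B : ι → ι → ℤ) (hskew : ∀ l m, B m l = -B l m)
    (w : ι → ℤ) (η : ι) : IsBalancedAt B w η ↔ ∑ μ, B μ η * w μ = 0 := by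
  unfold IsBalancedAt
  rw [← sub_eq_zero, ← Finset.sum_sub_distrib]
  have h : ∀ μ : ι, max (B μ η) 0 * w μ - max (B η μ) 0 * w μ = B μ η * w μ := by
    intro μ
    rw [hskew μ η, ← sub_mul, max_sub_max]
  simp only [h]

lemma mutMat_skew {ι : Type*} [DecidableEq ι] (B : ι → ι → ℤ)
    (hskew : ∀ l m, B m l = -B l m) (ν : ι) :
    ∀ l m, mutMat B ν m l = -mutMat B ν l m := by
  intro l m
  unfold mutMat
  by_cases h : l = ν ∨ m = ν
  · rw [if_pos h.symm, if_pos h, hskew l m]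
  · rw [if_neg (fun hc => h hc.symm), if_neg h]
    simp only [hskew l m, hskew ν m, hskew l ν, neg_neg]
    ring

lemma prod_zpow_eq {ι : Type*} {a : ℝ} (ha : a ≠ 0) (s : Finset ι) (f : ι → ℤ) :
    ∏ i ∈ s, a ^ f i = a ^ (∑ i ∈ s, f i) := by
  classical
  induction s using Finset.cons_induction with
  | empty => simp
  | cons i s hi ih => rw [Finset.prod_cons, Finset.sum_cons, zpow_add₀ ha, ih]

lemma aux_real {Y A P : ℝ} (hY : Y ≠ 0) (hA : A ≠ 0) (S w : ℤ) :
    Y ^ w * P = Y⁻¹ ^ (S - w) * (P * A ^ S * (A * Y⁻¹) ^ (-S)) := by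
  rw [mul_zpow, inv_zpow', inv_zpow', neg_neg, show -(S - w) = -S + w by ring,
      zpow_add₀ hY]
  have hA2 : A ^ S * A ^ (-S) = 1 := by rw [← zpow_add₀ hA]; simp
  have hY2 : Y ^ (-S) * Y ^ S = 1 := by rw [← zpow_add₀ hY]; simp
  calc Y ^ w * P = (Y ^ (-S) * Y ^ S) * ((A ^ S * A ^ (-S)) * (Y ^ w * P)) := by
        rw [hY2, hA2]; ring
    _ = _ := by ring

/-- If `v ∈ ℤ^{Q₀}` is balanced at every mutable vertex, then the X-cluster
mutation at a mutable vertex `ν` of the Laurent monomial `x^v` is again a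
Laurent monomial `x'^{v'}` (with `x'` the mutated X-cluster variables,
`x'_ν = x_ν⁻¹`, `x'_μ = x_μ (1+x_ν)^{b_{νμ}} (1+x_ν⁻¹)^{-b_{μν}}` where only
nonnegative arrow counts contribute), where `v'_η = v_η` for `η ≠ ν` and
`v'_ν = (∑_{μ→ν} v_μ) - v_ν`; moreover `v'` is balanced at every mutable
vertex of the mutated quiver `Mut_ν(Q)`. -/
theorem stmt11 {ι : Type*} [Fintype ι] [DecidableEq ι]
    (B : ι → ι → ℤ) (hskew : ∀ l m, B m l = -B l m)
    (Mut : Set ι) (ν : ι) (hν : ν ∈ Mut) (v : ι → ℤ)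
    (hbal : ∀ η ∈ Mut, IsBalancedAt B v η) :
    (∀ x : ι → ℝ, (∀ μ, 0 < x μ) →
      ∏ μ, x μ ^ v μ =
        ∏ μ, (if μ = ν then (x ν)⁻¹
              else x μ * (1 + x ν) ^ max (B ν μ) 0 *
                (1 + (x ν)⁻¹) ^ (-max (B μ ν) 0)) ^
          (if μ = ν then (∑ η, max (B η ν) 0 * v η) - v ν else v μ)) ∧
    (∀ η ∈ Mut, IsBalancedAt (mutMat B ν)
      (fun μ => if μ = ν then (∑ ρ, max (B ρ ν) 0 * v ρ) - v ν else v μ) η) := by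
  have hBνν : B ν ν = 0 := by have := hskew ν ν; linarith
  have hS : ∑ μ, max (B μ ν) 0 * v μ = ∑ μ, max (B ν μ) 0 * v μ := hbal ν hν
  set S : ℤ := ∑ μ, max (B μ ν) 0 * v μ with hSdef
  constructor
  · intro x hx
    have hy : (0:ℝ) < x ν := hx ν
    have hy0 : x ν ≠ 0 := hy.ne'
    have h1 : (0:ℝ) < 1 + x ν := by linarith
    have h10 : (1:ℝ) + x ν ≠ 0 := h1.ne'
    have key : (1:ℝ) + (x ν)⁻¹ = (1 + x ν) * (x ν)⁻¹ := by field_simp; ring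
    rw [← Finset.mul_prod_erase Finset.univ (fun μ => x μ ^ v μ) (Finset.mem_univ ν),
        ← Finset.mul_prod_erase Finset.univ _ (Finset.mem_univ ν)]
    simp only [if_pos rfl]
    have hprod : ∏ μ ∈ Finset.univ.erase ν,
        ((if μ = ν then (x ν)⁻¹
          else x μ * (1 + x ν) ^ max (B ν μ) 0 * (1 + (x ν)⁻¹) ^ (-max (B μ ν) 0)) ^
          (if μ = ν then S - v ν else v μ))
        = (∏ μ ∈ Finset.univ.erase ν, x μ ^ v μ) *
          (1 + x ν) ^ (∑ μ ∈ Finset.univ.erase ν, max (B ν μ) 0 * v μ) *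
          (1 + (x ν)⁻¹) ^ (∑ μ ∈ Finset.univ.erase ν, -(max (B μ ν) 0) * v μ) := by
      rw [← prod_zpow_eq h10, ← prod_zpow_eq (by positivity : (1:ℝ) + (x ν)⁻¹ ≠ 0),
          ← Finset.prod_mul_distrib, ← Finset.prod_mul_distrib]
      refine Finset.prod_congr rfl (fun μ hμ => ?_)
      have hμν : μ ≠ ν := Finset.ne_of_mem_erase hμ
      rw [if_neg hμν, if_neg hμν, mul_zpow, mul_zpow, ← zpow_mul, ← zpow_mul]
    rw [hprod]
    have e1 : ∑ μ ∈ Finset.univ.erase ν, max (B ν μ) 0 * v μ = S := by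
      rw [Finset.sum_erase _ (by simp [hBνν])]
      exact hS.symm
    have e2 : ∑ μ ∈ Finset.univ.erase ν, -(max (B μ ν) 0) * v μ = -S := by
      rw [Finset.sum_erase (f := fun μ => -(max (B μ ν) 0) * v μ) _ (by simp [hBνν]),
        hSdef, ← Finset.sum_neg_distrib]
      exact Finset.sum_congr rfl (fun μ _ => by ring)
    rw [e1, e2, key]
    exact aux_real hy0 h10 S (v ν)
  · intro η hη
    rw [bal_iff _ (mutMat_skew B hskew ν)]
    have Hν : ∑ μ, B μ ν * v μ = 0 := (bal_iff B hskew v ν).mp (hbal ν hν)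
    by_cases hEq : η = ν
    · subst hEq
      have h0 : ∀ μ : ι, mutMat B η μ η *
          (if μ = η then S - v η else v μ) = -(B μ η * v μ) := by
        intro μ
        by_cases hμ : μ = η
        · subst hμ; simp [mutMat, hBνν]
        · rw [if_neg hμ]
          simp [mutMat]
      simp only [h0]
      rw [Finset.sum_neg_distrib, Hν, neg_zero]
    · have Hη : ∑ μ, B μ η * v μ = 0 := (bal_iff B hskew v η).mp (hbal η hη)
      have hpt : ∀ μ : ι, mutMat B ν μ η *
          (if μ = ν then S - v ν else v μ)
          = (B μ η + max (B μ ν) 0 * max (B ν η) 0 - max (-B μ ν) 0 * max (-B ν η) 0) * v μ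
            + (if μ = ν then -B ν η * S else 0) := by
        intro μ
        by_cases hμ : μ = ν
        · subst hμ
          simp [mutMat, hBνν]
          ring
        · rw [if_neg hμ, if_neg hμ]
          simp only [mutMat, if_neg (by tauto : ¬(μ = ν ∨ η = ν))]
          ring
      simp only [hpt]
      rw [Finset.sum_add_distrib, Finset.sum_ite_eq']
      have hg : ∑ μ : ι, (B μ η + max (B μ ν) 0 * max (B ν η) 0
            - max (-B μ ν) 0 * max (-B ν η) 0) * v μ
          = (∑ μ, B μ η * v μ) + max (B ν η) 0 * (∑ μ, max (B μ ν) 0 * v μ)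
            - max (-B ν η) 0 * (∑ μ, max (-B μ ν) 0 * v μ) := by
        rw [Finset.mul_sum, Finset.mul_sum, ← Finset.sum_add_distrib, ← Finset.sum_sub_distrib]
        exact Finset.sum_congr rfl (fun μ _ => by ring)
      have haux : ∑ μ : ι, max (-B μ ν) 0 * v μ = S := by
        rw [hS]
        exact Finset.sum_congr rfl (fun μ _ => by rw [hskew μ ν])
      rw [hg, haux, Hη, ← hSdef]
      have hmax : max (B ν η) 0 - max (-B ν η) 0 = B ν η := max_sub_max _
      simp only [Finset.mem_univ, if_pos]
      linear_combination S * hmax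
end

section
/- Let L be a finite-dimensional subspace of the field of rational functions C(X₁,…,X_m), and let val be the valuation assigning to each nonzero Laurent polynomial the exponent vector of its lexicographically minimal monomial (extended to rational functions by val(f/g) = val(f) − val(g)). Then the image val(L \ {0}) ⊂ Z^m has cardinality exactly dim L. (The valuation has one-dimensional leaves.) -/
/-!
Order the exponents lexicographically and let `a` be the smallest lowest exponent occurring in
`L`. Some `f ∈ L` has a nonzero coefficient at `a`, so the coefficient at `a` is a nonzero
functional on `L`, whose kernel `L'` has dimension `dim L - 1`. By minimality of `a`, every
`g ∈ L` whose lowest exponent is not `a` vanishes at `a`, so the lowest exponents of `L'` are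
exactly those of `L` other than `a`; induction on `dim L` finishes the proof.
-/

/-- Lexicographic order on exponent vectors `Fin m → ℤ` (with respect to the
order of the variables `X₁, …, X_m`). -/
def lexLE (m : ℕ) (v u : Fin m → ℤ) : Prop :=
  v = u ∨ ∃ i : Fin m, (∀ j : Fin m, j < i → v j = u j) ∧ v i < u i

open Module Finsupp

theorem Submodule.finrank_inf_ker_add_one {K V : Type*} [Field K] [AddCommGroup V] [Module K V]
    {L : Submodule K V} [FiniteDimensional K L] {φ : V →ₗ[K] K} (h : ¬ L ≤ LinearMap.ker φ) :
    finrank K ↥(L ⊓ LinearMap.ker φ) + 1 = finrank K L := by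
  have hφ : φ.domRestrict L ≠ 0 := by
    contrapose! h
    exact fun x hx => LinearMap.congr_fun h ⟨x, hx⟩
  rw [← Submodule.map_comap_subtype, Submodule.finrank_map_subtype_eq,
    ← LinearMap.ker_domRestrict]
  exact Module.Dual.finrank_ker_add_one_of_ne_zero hφ

namespace Submodule

variable {K σ : Type*} [Field K] [LinearOrder σ]

def lowestExponents (L : Submodule K (σ →₀ K)) : Set σ :=
  {a | ∃ f ∈ L, IsLeast (f.support : Set σ) a}

variable {L : Submodule K (σ →₀ K)}

theorem lowestExponents_finite [FiniteDimensional K L] : L.lowestExponents.Finite := by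
  obtain ⟨s, rfl⟩ : L.FG := Module.Finite.iff_fg.mp inferInstance
  refine (s.finite_toSet.biUnion fun f _ => f.support.finite_toSet).subset ?_
  rintro a ⟨f, hf, ha, -⟩
  have hspan : span K (s : Set (σ →₀ K)) ≤ supported K K (⋃ g ∈ s, (g.support : Set σ)) :=
    span_le.mpr fun g hg => (mem_supported K g).mpr
      (Set.subset_biUnion_of_mem (u := fun g : σ →₀ K => (g.support : Set σ)) hg)
  exact (mem_supported K f).mp (hspan hf) ha

theorem lowestExponents_nonempty (hL : L ≠ ⊥) : L.lowestExponents.Nonempty := by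
  obtain ⟨f, hfL, hf⟩ := L.ne_bot_iff.mp hL
  have hsupp : f.support.Nonempty := support_nonempty_iff.mpr hf
  exact ⟨_, f, hfL, f.support.isLeast_min' hsupp⟩

theorem not_le_ker_lapply_of_mem_lowestExponents {a : σ} (ha : a ∈ L.lowestExponents) :
    ¬ L ≤ LinearMap.ker (lapply a) := by
  obtain ⟨f, hfL, hfa⟩ := ha
  exact fun hle => mem_support_iff.mp hfa.1 (hle hfL)

theorem lowestExponents_inf_ker_lapply {a : σ} (ha : ∀ b ∈ L.lowestExponents, a ≤ b) :
    (L ⊓ LinearMap.ker (lapply a)).lowestExponents = L.lowestExponents \ {a} := by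
  ext b
  constructor
  · rintro ⟨f, ⟨hfL, hfa⟩, hb⟩
    refine ⟨⟨f, hfL, hb⟩, ?_⟩
    rintro rfl
    exact mem_support_iff.mp hb.1 hfa
  · rintro ⟨⟨f, hfL, hb⟩, hba⟩
    have hab : a < b := lt_of_le_of_ne (ha b ⟨f, hfL, hb⟩) (Ne.symm hba)
    have hfa : f a = 0 := notMem_support_iff.mp fun hmem => absurd hab (not_lt.mpr (hb.2 hmem))
    exact ⟨f, ⟨hfL, hfa⟩, hb⟩

theorem ncard_lowestExponents [FiniteDimensional K L] :
    L.lowestExponents.ncard = finrank K L := by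
  induction h : finrank K L using Nat.strong_induction_on generalizing L with
  | _ n ih =>
  rcases eq_or_ne L ⊥ with rfl | hL
  · simp [lowestExponents, IsLeast, ← h]
  obtain ⟨a, ha, hmin⟩ : ∃ a ∈ L.lowestExponents, ∀ b ∈ L.lowestExponents, a ≤ b :=
    Set.exists_min_image _ id lowestExponents_finite (lowestExponents_nonempty hL)
  have hdim := finrank_inf_ker_add_one (not_le_ker_lapply_of_mem_lowestExponents ha)
  rw [← Set.ncard_sdiff_singleton_add_one ha lowestExponents_finite,
    ← lowestExponents_inf_ker_lapply hmin, ih _ (by omega) rfl, hdim, h]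

end Submodule

theorem lexLE_iff_toLex_le {m : ℕ} {v u : Fin m → ℤ} : lexLE m v u ↔ toLex v ≤ toLex u := by
  rw [le_iff_eq_or_lt]
  rfl

/-- Let `L` be a finite-dimensional subspace of the Laurent polynomial ring
`ℂ[X₁^{±1}, …, X_m^{±1}]` (modeled as `AddMonoidAlgebra ℂ (Fin m → ℤ)`), and
let `val f` denote the exponent vector of the lexicographically minimal
monomial of a nonzero `f`.  Then the image `val (L \ {0})` (described here as
the set of lex-minimal support vectors of nonzero elements of `L`) has
cardinality exactly `dim L`: the valuation has one-dimensional leaves. -/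
theorem stmt14 (m : ℕ) (L : Submodule ℂ (AddMonoidAlgebra ℂ (Fin m → ℤ)))
    [FiniteDimensional ℂ L] :
    Set.ncard {v : Fin m → ℤ | ∃ f ∈ L, f ≠ 0 ∧ v ∈ f.coeff.support ∧
        ∀ u ∈ f.coeff.support, lexLE m v u} = Module.finrank ℂ L := by
  set e := (AddMonoidAlgebra.coeffLinearEquiv ℂ).trans
    (Finsupp.domLCongr (M := ℂ) (R := ℂ) (toLex : (Fin m → ℤ) ≃ Lex (Fin m → ℤ)))
  have hset : {v : Fin m → ℤ | ∃ f ∈ L, f ≠ 0 ∧ v ∈ f.coeff.support ∧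
      ∀ u ∈ f.coeff.support, lexLE m v u} = toLex ⁻¹' (L.map e.toLinearMap).lowestExponents := by
    ext v
    simp only [Set.mem_preimage, Submodule.lowestExponents, Submodule.mem_map,
      exists_exists_and_eq_and]
    refine exists_congr fun f => and_congr_right fun _ => ?_
    simp only [ne_eq, Finsupp.mem_support_iff, lexLE_iff_toLex_le, IsLeast, LinearEquiv.coe_coe,
      LinearEquiv.trans_apply, AddMonoidAlgebra.coeffLinearEquiv_apply, domLCongr_apply,
      domCongr_apply, SetLike.mem_coe, equivMapDomain_apply, toLex_symm_eq, ofLex_toLex,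
      lowerBounds, Lex.forall, Set.mem_ofPred_eq, and_iff_right_iff_imp, and_imp, e]
    rintro hv - rfl
    simp at hv
  rw [hset, Set.ncard_preimage_of_injective_subset_range toLex.injective (by simp),
    Submodule.ncard_lowestExponents, LinearEquiv.finrank_map_eq]
end
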